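/- Let α > 0, γ_P > 0, γ_I > 0, let Ψ, Ψ_f : ℝ → ℝ^{3×3} and ε : ℝ → ℝ³ be continuous, and let ĩ : ℝ → ℝ³ and θ̃ : ℝ → ℝ³ be differentiable functions satisfying the error dynamics ĩ'(t) = −α·ĩ(t) + Ψ(t)·θ̃(t) and θ̃'(t) = −γ_P·Ψ(t)ᵀ·ĩ(t) − γ_I·Ψ_f(t)ᵀ·Ψ_f(t)·θ̃(t) + Ψ_f(t)ᵀ·ε(t). Then the function V(t) := (1/2)|ĩ(t)|² + (1/(2γ_P))|θ̃(t)|² is differentiable and satisfies, for all t, V'(t) = −α·|ĩ(t)|² − (γ_I/γ_P)·|Ψ_f(t)·θ̃(t)|² + (1/γ_P)·⟨Ψ_f(t)·θ̃(t), ε(t)⟩. -/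

import Mathlib

open Matrix

theorem HasDerivAt.sum_sq {𝕜 ι : Type*} [NontriviallyNormedField 𝕜] [Fintype ι]
    {f : 𝕜 → ι → 𝕜} {f' : ι → 𝕜} {t : 𝕜}
    (hf : HasDerivAt f f' t) :
    HasDerivAt (fun τ => ∑ j, f τ j ^ 2) (2 * (f t ⬝ᵥ f')) t := by
  have hsum := HasDerivAt.fun_sum fun j (_ : j ∈ Finset.univ) => (hasDerivAt_pi.mp hf j).pow 2
  refine hsum.congr_deriv ?_
  simp only [dotProduct, Finset.mul_sum]
  exact Finset.sum_congr rfl fun j _ => by push_cast; ring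

theorem lyapunov_derivative_composite_identifier
    (α γP γI : ℝ) (hγP : 0 < γP)
    (Ψ Ψf : ℝ → Matrix (Fin 3) (Fin 3) ℝ) (ε : ℝ → Fin 3 → ℝ)
    (itil θtil : ℝ → Fin 3 → ℝ)
    (hitil : ∀ t : ℝ, HasDerivAt itil (-α • itil t + Ψ t *ᵥ θtil t) t)
    (hθtil : ∀ t : ℝ, HasDerivAt θtil
      (-γP • ((Ψ t)ᵀ *ᵥ itil t) - γI • ((Ψf t)ᵀ *ᵥ (Ψf t *ᵥ θtil t))
        + (Ψf t)ᵀ *ᵥ ε t) t) :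
    ∀ t : ℝ, HasDerivAt
      (fun τ => (1 / 2) * ∑ j : Fin 3, itil τ j ^ 2
        + (1 / (2 * γP)) * ∑ j : Fin 3, θtil τ j ^ 2)
      (-α * ∑ j : Fin 3, itil t j ^ 2
        - (γI / γP) * ∑ j : Fin 3, (Ψf t *ᵥ θtil t) j ^ 2
        + (1 / γP) * ∑ j : Fin 3, (Ψf t *ᵥ θtil t) j * ε t j) t := by
  intro t
  refine (((hitil t).sum_sq.const_mul (1 / 2)).add
    ((hθtil t).sum_sq.const_mul (1 / (2 * γP)))).congr_deriv ?_
  -- the weight `1 / (2 γP)` makes the cross terms `⟨ĩ, Ψ θ̃⟩` and `-γP ⟨θ̃, Ψᵀ ĩ⟩` cancel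
  simp only [dotProduct_add, dotProduct_sub, dotProduct_smul, smul_eq_mul,
    dotProduct_transpose_mulVec, sq, ← dotProduct.eq_1, dotProduct_comm (ε t)]
  field_simp [hγP.ne']
  ring
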